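/- Let u, v, u', v' form a Tie(u; v, u', v') with d(u,v) ≤ 1, d(u',v') ≤ 1, and let w be a point with d(u,w) ≤ 1 and ∠(w u v) ≤ 5π/6 such that segment u'u crosses segment wv. Then d(w,u') ≤ 2. -/

import Mathlib

/-!
Put `u` at the origin, `v` on the positive `x`-axis and `u'` in the upper half-plane, and let
`f = (-√3/2, 1/2)` be the unit vector making the angle `5π/6` with `uv`. The crossing of `uu'`
with `wv` puts the ray `uu'` between the rays `uw` and `uv`, so
`∠wuu' = ∠wuv - ∠u'uv ≤ 5π/6 - ∠u'uv = ∠fuu'`. As `|uw| ≤ 1`, the law of cosines then gives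
`|wu'| ≤ max |uu'| |fu'|`.

It remains to show `|fu'| ≤ 2`. Let `q = (r, 0)` be the crossing point of `uv` and `u'v'`, so that
`r ≤ 1` and `t = |qu'| ≤ 1`. Stewart's theorem in the triangle `u u' v'`, with `|uv'| > |uv| ≥ r`
and `|u'v'| ≤ 1`, gives `|uu'|² ≤ r² + t`. Under this constraint `|u' - f|² ≤ 4` is an elementary
inequality; its extremal case `r = 1` reduces to the cubic `(1 - 2c)(√3 c + c²) ≤ 2 - √3`, where
`c` is the cosine of the angle between `qu'` and the `x`-axis.
-/

open EuclideanGeometry Real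

abbrev Pt := EuclideanSpace ℝ (Fin 2)

/-- Two segments cross: they meet at a point interior to both. -/
def Crosses (a b c d : Pt) : Prop :=
  ∃ p : Pt, p ∈ openSegment ℝ a b ∧ p ∈ openSegment ℝ c d

/-- Tie(a; b, c, d). -/
def Tie (a b c d : Pt) : Prop :=
  Crosses a b c d ∧ dist a c > dist a b ∧ dist a d > dist a b ∧ dist a c > dist c d

-- The maximum of the left side is about `0.249`, at `c ≈ 0.27`, against `2 - √3 ≈ 0.268`.
lemma one_sub_two_mul_mul_le_two_sub_sqrt_three {c : ℝ} (hc0 : 0 ≤ c) (hc1 : c ≤ 1 / 2) :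
    (1 - 2 * c) * (√3 * c + c ^ 2) ≤ 2 - √3 := by
  have hs : √3 < 26 / 15 := by
    rw [sqrt_lt' (by norm_num)]
    norm_num
  have h : (1 - 2 * c) * (26 / 15 * c + c ^ 2) ≤ 2 - 26 / 15 := by
    nlinarith [mul_nonneg hc0 (sq_nonneg (c - 27 / 100)),
      mul_nonneg (by linarith : (0:ℝ) ≤ 1 / 2 - c) (sq_nonneg (c - 27 / 100))]
  nlinarith [mul_nonneg (by linarith : (0:ℝ) ≤ 1 - 2 * c) hc0]

lemma sq_add_sqrt_three_mul_add_mul_le_three {r c : ℝ} (hr0 : 0 ≤ r) (hr1 : r ≤ 1)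
    (hc0 : 0 ≤ c) (hc1 : c ≤ 1) (hrc : 2 * r * c ≤ 1) :
    r ^ 2 + √3 * r + (1 - 2 * r * c) * (√3 * c + c ^ 2) ≤ 3 := by
  have hs : 1 ≤ √3 ∧ √3 ≤ 2 :=
    ⟨by rw [le_sqrt] <;> norm_num, by rw [sqrt_le_left] <;> norm_num⟩
  have hK : 0 ≤ √3 * c + c ^ 2 := by positivity
  have hconvex : r ^ 2 + √3 * r ≤ r * (1 + √3) := by nlinarith
  rcases le_or_gt c (1 / 2) with hc | hc
  · nlinarith [mul_le_mul_of_nonneg_left (one_sub_two_mul_mul_le_two_sub_sqrt_three hc0 hc) hr0,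
      mul_nonneg (sub_nonneg.2 hr1) (by nlinarith : (0:ℝ) ≤ 3 - (√3 * c + c ^ 2))]
  · nlinarith [mul_nonneg (sub_nonneg.2 hrc)
      (by nlinarith : (0:ℝ) ≤ 1 + √3 - (√3 * c + c ^ 2))]

-- The conclusion says that `(x, y)` is at distance at most `2` from `(-√3/2, 1/2)`.
lemma sq_add_sq_add_sqrt_three_mul_sub_le_three {r t x y : ℝ} (hr0 : 0 ≤ r) (hr1 : r ≤ 1)
    (ht0 : 0 ≤ t) (hy : 0 ≤ y) (hxy : (x - r) ^ 2 + y ^ 2 = t ^ 2)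
    (hL : x ^ 2 + y ^ 2 ≤ r ^ 2 + t) :
    x ^ 2 + y ^ 2 + √3 * x - y ≤ 3 := by
  have hs : 1 ≤ √3 ∧ √3 ≤ 2 :=
    ⟨by rw [le_sqrt] <;> norm_num, by rw [sqrt_le_left] <;> norm_num⟩
  have h3 : √3 ^ 2 = 3 := sq_sqrt (by norm_num)
  suffices h : r ^ 2 + √3 * r + (t + √3 * (x - r) - y) ≤ 3 by linarith
  have hyt : y ≤ t := by nlinarith
  rcases le_or_gt x r with hxr | hxr
  · have hsq : t ^ 2 ≤ (√3 * (r - x) + y) ^ 2 := by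
      nlinarith [mul_nonneg (mul_nonneg (sqrt_nonneg 3) (sub_nonneg.2 hxr)) hy]
    have : t ≤ √3 * (r - x) + y :=
      (pow_le_pow_iff_left₀ ht0 (by nlinarith) two_ne_zero).1 hsq
    nlinarith
  · have htpos : 0 < t := by nlinarith
    set c := (x - r) / t with hc
    have hxc : x - r = t * c := by rw [hc]; field_simp
    have hc0 : 0 ≤ c := by positivity
    have hc1 : c ≤ 1 := by rw [hc, div_le_one htpos]; nlinarith
    have hrc : 2 * r * c ≤ 1 - t := by
      have : t * (2 * r * c) ≤ t * (1 - t) := by nlinarith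
      exact le_of_mul_le_mul_left this htpos
    -- `y / t ≥ (y / t) ^ 2 = 1 - c ^ 2`
    have hsin : t + √3 * (x - r) - y ≤ t * (√3 * c + c ^ 2) := by
      have : t * (t + √3 * (x - r) - y) ≤ t * (t * (√3 * c + c ^ 2)) := by
        rw [hxc] at hxy ⊢
        nlinarith
      exact le_of_mul_le_mul_left this htpos
    have hK : t * (√3 * c + c ^ 2) ≤ (1 - 2 * r * c) * (√3 * c + c ^ 2) :=
      mul_le_mul_of_nonneg_right (by linarith) (by positivity)
    linarith [sq_add_sqrt_three_mul_add_mul_le_three hr0 hr1 hc0 hc1 (by linarith)]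

section Segment

variable {E : Type*} [AddCommGroup E] [Module ℝ E]

lemma wbtw_of_mem_openSegment {x y z : E} (h : y ∈ openSegment ℝ x z) : Wbtw ℝ x y z :=
  mem_segment_iff_wbtw.1 (openSegment_subset_segment ℝ x z h)

lemma sbtw_of_mem_openSegment {x y z : E} (h : y ∈ openSegment ℝ x z) (hxz : x ≠ z) :
    Sbtw ℝ x y z :=
  ⟨wbtw_of_mem_openSegment h, fun hyx => hxz (left_mem_openSegment_iff.1 (hyx ▸ h)),
    fun hyz => hxz (right_mem_openSegment_iff.1 (hyz ▸ h))⟩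

end Segment

section Euclidean

variable {V P : Type*} [NormedAddCommGroup V] [InnerProductSpace ℝ V] [MetricSpace P]
  [NormedAddTorsor V P]

lemma Wbtw.dist_le {x y z : P} (h : Wbtw ℝ x y z) : dist x y ≤ dist x z := by
  linarith [h.dist_add_dist, dist_nonneg (x := y) (y := z)]

lemma angle_eq_of_mem_openSegment {x u v q : V} (h : q ∈ openSegment ℝ u v) :
    ∠ x u q = ∠ x u v := by
  rcases eq_or_ne u v with rfl | huv
  · rw [openSegment_same, Set.mem_singleton_iff] at h
    rw [h]
  · exact (sbtw_of_mem_openSegment h huv).angle_eq_right x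

lemma dist_sq_le_of_sbtw {a b c p : P} (h : Sbtw ℝ b p c) (hpc : dist a p ≤ dist a c) :
    dist a b ^ 2 ≤ dist a p ^ 2 + dist b p * dist b c := by
  have hstewart := dist_sq_mul_dist_add_dist_sq_mul_dist a b c p h.angle₁₂₃_eq_pi
  have hbc : dist b p + dist c p = dist b c := by
    rw [dist_comm c p]
    exact h.wbtw.dist_add_dist
  have hcp : 0 < dist c p := dist_pos.2 h.ne_right.symm
  have hsq : dist a p ^ 2 * dist b p ≤ dist a c ^ 2 * dist b p := by gcongr
  have : dist a b ^ 2 * dist c p ≤ (dist a p ^ 2 + dist b p * dist b c) * dist c p := by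
    nlinarith
  exact le_of_mul_le_mul_right this hcp

lemma dist_sq_add_cos_angle_add_pi_div_six_le_three {u u' v' q : P} (hq : Sbtw ℝ u' q v')
    (huq : dist u q ≤ 1) (hv' : dist u q ≤ dist u v') (hT : dist u' v' ≤ 1) :
    dist u u' ^ 2 + 2 * dist u u' * cos (∠ u' u q + π / 6) ≤ 3 := by
  have hpolar : (dist u u' * cos (∠ u' u q)) ^ 2 + (dist u u' * sin (∠ u' u q)) ^ 2
      = dist u u' ^ 2 := by
    linear_combination dist u u' ^ 2 * sin_sq_add_cos_sq (∠ u' u q)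
  have hlaw := law_cos u' u q
  rw [dist_comm u' u, dist_comm q u] at hlaw
  have hstewart := dist_sq_le_of_sbtw hq hv'
  have ht : dist u' q * dist u' v' ≤ dist u' q := mul_le_of_le_one_right dist_nonneg hT
  have hplane := sq_add_sq_add_sqrt_three_mul_sub_le_three
    (x := dist u u' * cos (∠ u' u q)) (y := dist u u' * sin (∠ u' u q)) (t := dist u' q)
    dist_nonneg huq dist_nonneg
    (mul_nonneg dist_nonneg
      (sin_nonneg_of_nonneg_of_le_pi (angle_nonneg _ _ _) (angle_le_pi _ _ _)))
    (by linear_combination hpolar - hlaw) (by linarith)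
  rw [cos_add, cos_pi_div_six, sin_pi_div_six]
  linarith

lemma dist_le_two_of_angle_add_angle_le {u v u' w : P} (huw : dist u w ≤ 1)
    (hL : dist u u' ≤ 2) (hf : dist u u' ^ 2 + 2 * dist u u' * cos (∠ u' u v + π / 6) ≤ 3)
    (hang : ∠ w u u' + ∠ u' u v ≤ 5 * π / 6) : dist w u' ≤ 2 := by
  have hcos : -cos (∠ u' u v + π / 6) ≤ cos (∠ w u u') := by
    rw [← cos_pi_sub]
    apply cos_le_cos_of_nonneg_of_le_pi (angle_nonneg _ _ _) _ (by linarith)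
    linarith [angle_nonneg u' u v, pi_pos]
  have hlaw := law_cos w u u'
  rw [dist_comm w u, dist_comm u' u] at hlaw
  have hW := dist_nonneg (x := u) (y := w)
  have hL0 := dist_nonneg (x := u) (y := u')
  have : dist w u' ^ 2 ≤ 2 ^ 2 := by
    nlinarith [mul_le_mul_of_nonneg_left hcos (mul_nonneg hW hL0),
      mul_nonneg hW (sub_nonneg.2 huw), mul_nonneg (sub_nonneg.2 huw) (sub_nonneg.2 hL)]
  exact (pow_le_pow_iff_left₀ dist_nonneg zero_le_two two_ne_zero).1 this

end Euclidean

theorem stmt11 (u v u' v' w : Pt)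
    (htie : Tie u v u' v')
    (huv : dist u v ≤ 1) (huv' : dist u' v' ≤ 1)
    (huw : dist u w ≤ 1)
    (hang : EuclideanGeometry.angle w u v ≤ 5 * π / 6)
    (hcross : Crosses u' u w v) :
    dist w u' ≤ 2 := by
  obtain ⟨⟨q, hq_uv, hq_u'v'⟩, hS, hU, -⟩ := htie
  obtain ⟨p, hp_u'u, hp_wv⟩ := hcross
  have hr : dist u q ≤ dist u v := (wbtw_of_mem_openSegment hq_uv).dist_le
  have ht : dist u' q ≤ dist u' v' := (wbtw_of_mem_openSegment hq_u'v').dist_le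
  have hL : dist u u' ≤ 2 := by linarith [dist_triangle u q u', dist_comm q u']
  have hu'v' : u' ≠ v' := by
    rintro rfl
    rw [openSegment_same, Set.mem_singleton_iff] at hq_u'v'
    subst hq_u'v'
    linarith
  have hf := dist_sq_add_cos_angle_add_pi_div_six_le_three (V := Pt)
    (sbtw_of_mem_openSegment hq_u'v' hu'v') (hr.trans huv) (hr.trans hU.le) huv'
  rw [angle_eq_of_mem_openSegment hq_uv] at hf
  rcases eq_or_ne w v with rfl | hwv
  · rw [openSegment_same, Set.mem_singleton_iff] at hp_wv
    rw [← hp_wv, dist_comm]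
    exact (wbtw_of_mem_openSegment hp_u'u).dist_le.trans (dist_comm u' u ▸ hL)
  · have hu'u : u' ≠ u := (dist_pos.1 (dist_nonneg.trans_lt hS)).symm
    have hadd := angle_add_angle_eq_of_sbtw_of_sameRay (V := Pt)
      (sbtw_of_mem_openSegment hp_wv hwv) (wbtw_of_mem_openSegment hp_u'u).symm.sameRay_vsub_left
      hu'u
    exact dist_le_two_of_angle_add_angle_le (V := Pt) huw hL hf (hadd ▸ hang)
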